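/- Let C be a category with covers. Let S ↪ T be an inclusion of finite simplicial sets, where S is collapsible with a chosen filtration Δ⁰ ≅ S₀ ↪ S₁ ↪ ⋯ ↪ S_N = S such that S_{ℓ+1} ≅ S_ℓ ∪_{Λ^{n_ℓ}_{i_ℓ}} Δ^{n_ℓ} for all 0 ≤ ℓ < N. Let f : X → Y, g : X → Z, h : Y → Z be morphisms in sC with h ∘ f = g. Suppose: f₀ : X₀ → Y₀ is a cover; for every 1 ≤ k ≤ dim S and every 0 ≤ i ≤ k the presheaf Λᵏ_i(f) is representable and λᵏ_i(f) is a cover; and the presheaf (S_ℓ ↪ T)(h) := hom(S_ℓ, Y) ×_{hom(S_ℓ, Z)} hom(T, Z) is representable in C for all 0 ≤ ℓ ≤ N. Then for all 0 ≤ ℓ ≤ N the presheaf (S_ℓ ↪ T)(g) := hom(S_ℓ, X) ×_{hom(S_ℓ, Z)} hom(T, Z) is representable in C, and the map f_* : (S_ℓ ↪ T)(g) → (S_ℓ ↪ T)(h) induced by f is a cover. -/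

import Mathlib

open CategoryTheory CategoryTheory.Limits Opposite

universe v u

/-- A *category with covers*: a (locally small) category `C` together with a distinguished
subcategory of morphisms, called *covers*, satisfying the axioms of the paper:
(i) there is a terminal object and every map to it is a cover;
(ii) pullbacks of covers along arbitrary morphisms exist and are covers;
(iii) if `f` and `f ≫ g` are covers then so is `g`;
(iv) every cover is an effective epimorphism, i.e. `X ×_Y X ⇉ X → Y` is a coequalizer. -/
structure CoversOn (C : Type u) [Category.{v} C] where
  /-- the distinguished class of covers -/
  isCover : ∀ ⦃X Y : C⦄, (X ⟶ Y) → Prop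
  /-- identities are covers (covers form a subcategory) -/
  isCover_id : ∀ X : C, isCover (𝟙 X)
  /-- covers are closed under composition (covers form a subcategory) -/
  isCover_comp : ∀ {X Y Z : C} {f : X ⟶ Y} {g : Y ⟶ Z}, isCover f → isCover g → isCover (f ≫ g)
  /-- axiom (i): `C` has a terminal object -/
  hasTerminal : HasTerminal C
  /-- axiom (i): every morphism to a terminal object is a cover -/
  isCover_toTerminal : ∀ {T : C} (hT : IsTerminal T) (X : C), isCover (hT.from X)
  /-- axiom (ii): pullbacks of covers along arbitrary morphisms exist -/
  hasPullback_of_isCover : ∀ {X Y Z : C} (f : X ⟶ Z) {g : Y ⟶ Z}, isCover g → HasPullback f g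
  /-- axiom (ii): pullbacks of covers are covers -/
  isCover_of_isPullback : ∀ {P X Y Z : C} {fst : P ⟶ X} {snd : P ⟶ Y} {f : X ⟶ Z} {g : Y ⟶ Z},
    IsPullback fst snd f g → isCover g → isCover fst
  /-- axiom (iii): right cancellation -/
  isCover_of_comp : ∀ {X Y Z : C} {f : X ⟶ Y} {g : Y ⟶ Z}, isCover f → isCover (f ≫ g) → isCover g
  /-- axiom (iv): covers are effective epimorphisms: for any kernel pair `p₁, p₂ : X ×_Y X ⇉ X`
  of a cover `f : X ⟶ Y`, the fork `X ×_Y X ⇉ X → Y` is a coequalizer -/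
  isCoequalizer_of_isCover : ∀ {X Y : C} {f : X ⟶ Y}, isCover f →
    ∀ {P : C} {p₁ p₂ : P ⟶ X} (h : IsPullback p₁ p₂ f f),
      Nonempty (IsColimit (Cofork.ofπ f h.w))

open Simplicial

namespace CatCov

variable {C : Type u} [Category.{v} C]

/-- The concrete pullback presheaf `F ×_H G` of two presheaf morphisms `α : F ⟶ H`, `β : G ⟶ H`. -/
@[simps]
def cpb {F G H : Cᵒᵖ ⥤ Type v} (α : F ⟶ H) (β : G ⟶ H) : Cᵒᵖ ⥤ Type v where
  obj U := { p : F.obj U × G.obj U // α.app U p.1 = β.app U p.2 }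
  map {U V} u := TypeCat.ofHom fun p => ⟨(F.map u p.1.1, G.map u p.1.2), by
    dsimp
    rw [FunctorToTypes.naturality, FunctorToTypes.naturality]
    exact congrArg (H.map u) p.2⟩
  map_id U := by
    ext p <;> simp
  map_comp {U V W} u v := by
    ext p <;> simp

/-- First projection of the concrete pullback presheaf. -/
@[simps]
def cpbFst {F G H : Cᵒᵖ ⥤ Type v} (α : F ⟶ H) (β : G ⟶ H) : cpb α β ⟶ F where
  app U := TypeCat.ofHom fun p => p.1.1

/-- Second projection of the concrete pullback presheaf. -/
@[simps]
def cpbSnd {F G H : Cᵒᵖ ⥤ Type v} (α : F ⟶ H) (β : G ⟶ H) : cpb α β ⟶ G where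
  app U := TypeCat.ofHom fun p => p.1.2

/-- The universal map into the concrete pullback presheaf. -/
@[simps]
def cpbLift {E F G H : Cᵒᵖ ⥤ Type v} {α : F ⟶ H} {β : G ⟶ H}
    (p : E ⟶ F) (q : E ⟶ G) (w : p ≫ α = q ≫ β) : E ⟶ cpb α β where
  app U := TypeCat.ofHom fun x => ⟨(p.app U x, q.app U x), ConcreteCategory.congr_hom (NatTrans.congr_app w U) x⟩
  naturality {U V} u := by
    ext x
    have h1 := ConcreteCategory.congr_hom (p.naturality u) x
    have h2 := ConcreteCategory.congr_hom (q.naturality u) x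
    apply Subtype.ext
    apply Prod.ext
    · exact h1
    · exact h2

/-- Functoriality of the concrete pullback presheaf in the defining cospan. -/
@[simps]
def cpbMap {F G H F' G' H' : Cᵒᵖ ⥤ Type v} {α : F ⟶ H} {β : G ⟶ H}
    {α' : F' ⟶ H'} {β' : G' ⟶ H'} (tF : F ⟶ F') (tG : G ⟶ G') (tH : H ⟶ H')
    (hα : α ≫ tH = tF ≫ α') (hβ : β ≫ tH = tG ≫ β') : cpb α β ⟶ cpb α' β' where
  app U := TypeCat.ofHom fun p => ⟨(tF.app U p.1.1, tG.app U p.1.2), by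
    have h1 := ConcreteCategory.congr_hom (NatTrans.congr_app hα U) p.1.1
    have h2 := ConcreteCategory.congr_hom (NatTrans.congr_app hβ U) p.1.2
    dsimp at h1 h2 ⊢
    rw [← h1, ← h2]
    exact congrArg (tH.app U) p.2⟩
  naturality {U V} u := by
    ext p
    have h1 := ConcreteCategory.congr_hom (tF.naturality u) p.1.1
    have h2 := ConcreteCategory.congr_hom (tG.naturality u) p.1.2
    apply Subtype.ext
    apply Prod.ext
    · exact h1
    · exact h2

/-- For a simplicial presheaf `F` and a simplicial set `K`, the presheaf `hom(K, F)` of simplicial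
maps from `K` into (the `U`-points of) `F`; concretely, a `U`-point is a compatible family
assigning to each simplex of `K` a `U`-point of the corresponding level of `F`. -/
@[simps]
def sHom (K : SSet.{v}) (F : SimplicialObject (Cᵒᵖ ⥤ Type v)) : Cᵒᵖ ⥤ Type v where
  obj U := { ξ : ∀ (j : SimplexCategoryᵒᵖ), K.obj j → (F.obj j).obj U //
      ∀ (j j' : SimplexCategoryᵒᵖ) (β : j ⟶ j') (a : K.obj j),
        ξ j' (K.map β a) = (F.map β).app U (ξ j a) }
  map {U V} u := TypeCat.ofHom fun ξ => ⟨fun j a => (F.obj j).map u (ξ.1 j a), by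
    intro j j' β a
    dsimp only
    rw [ξ.2 j j' β a]
    exact (NatTrans.naturality_apply (F.map β) u (ξ.1 j a)).symm⟩
  map_id U := by
    ext ξ j a
    simp
  map_comp {U V W} u v := by
    ext ξ j a
    simp

/-- `hom(K, -)` is covariantly functorial in the simplicial presheaf. -/
@[simps]
def sHomMap (K : SSet.{v}) {F G : SimplicialObject (Cᵒᵖ ⥤ Type v)} (φ : F ⟶ G) :
    sHom K F ⟶ sHom K G where
  app U := TypeCat.ofHom fun ξ => ⟨fun j a => (φ.app j).app U (ξ.1 j a), by
    intro j j' β a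
    dsimp only
    rw [ξ.2 j j' β a]
    exact ConcreteCategory.congr_hom (congrArg (fun (t : F.obj j ⟶ G.obj j') => t.app U) (φ.naturality β)) (ξ.1 j a)⟩
  naturality {U V} u := by
    ext ξ
    apply Subtype.ext
    funext j a
    dsimp
    exact NatTrans.naturality_apply (φ.app j) u (ξ.1 j a)

/-- `hom(-, F)` is contravariantly functorial in the simplicial set. -/
@[simps]
def sHomRes {K L : SSet.{v}} (i : K ⟶ L) (F : SimplicialObject (Cᵒᵖ ⥤ Type v)) :
    sHom L F ⟶ sHom K F where
  app U := TypeCat.ofHom fun ξ => ⟨fun j a => ξ.1 j (i.app j a), by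
    intro j j' β a
    rw [← ξ.2 j j' β (i.app j a)]
    exact congrArg (ξ.1 j') (ConcreteCategory.congr_hom (i.naturality β) a)⟩
  naturality {U V} u := by
    ext ξ
    rfl

/-- The canonical "Yoneda" map sending an `n`-simplex of a simplicial presheaf `F` to the
corresponding simplicial map `Δ[n] ⟶ F`. -/
@[simps]
def fromSimplex (F : SimplicialObject (Cᵒᵖ ⥤ Type v)) (n : SimplexCategory) :
    F.obj (op n) ⟶ sHom (SSet.stdSimplex.obj n) F where
  app U := TypeCat.ofHom fun x => ⟨fun j α => (F.map α.down.op).app U x, by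
    intro j j' β α
    show (F.map ((β.unop ≫ α.down)).op).app U x = _
    rw [op_comp, Quiver.Hom.op_unop, F.map_comp]
    rfl⟩
  naturality {U V} u := by
    ext x
    apply Subtype.ext
    funext j α
    dsimp
    exact NatTrans.naturality_apply (F.map α.down.op) u x

/-- Restriction of an `n`-simplex of `F` along a map of simplicial sets `ι : K ⟶ Δ[n]`. -/
def restrictAlong {K : SSet.{v}} {n : SimplexCategory} (ι : K ⟶ SSet.stdSimplex.obj n)
    (F : SimplicialObject (Cᵒᵖ ⥤ Type v)) : F.obj (op n) ⟶ sHom K F :=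
  fromSimplex F n ≫ sHomRes ι F

lemma restrictAlong_natural {K : SSet.{v}} {n : SimplexCategory}
    (ι : K ⟶ SSet.stdSimplex.obj n) {F G : SimplicialObject (Cᵒᵖ ⥤ Type v)} (φ : F ⟶ G) :
    restrictAlong ι F ≫ sHomMap K φ = φ.app (op n) ≫ restrictAlong ι G := by
  apply NatTrans.ext
  ext U x
  apply Subtype.ext
  funext j a
  dsimp [restrictAlong]
  exact ConcreteCategory.congr_hom (congrArg (fun (t : F.obj (op n) ⟶ G.obj j) => t.app U)
    (φ.naturality (ι.app j a).down.op)) x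

/-- For `ι : K ⟶ Δ[n]` and `φ : F ⟶ G`, the relative object
`(K ↪ Δ[n])(φ) := hom(K, F) ×_{hom(K, G)} G_n`. -/
def relObj {K : SSet.{v}} {n : SimplexCategory} (ι : K ⟶ SSet.stdSimplex.obj n)
    {F G : SimplicialObject (Cᵒᵖ ⥤ Type v)} (φ : F ⟶ G) : Cᵒᵖ ⥤ Type v :=
  cpb (sHomMap K φ) (restrictAlong ι G)

/-- The canonical comparison map `F_n ⟶ hom(K, F) ×_{hom(K, G)} G_n`. -/
def relMap {K : SSet.{v}} {n : SimplexCategory} (ι : K ⟶ SSet.stdSimplex.obj n)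
    {F G : SimplicialObject (Cᵒᵖ ⥤ Type v)} (φ : F ⟶ G) : F.obj (op n) ⟶ relObj ι φ :=
  cpbLift (restrictAlong ι F) (φ.app (op n)) (restrictAlong_natural ι φ)

/-- `RepCover cov w` says: the presheaves `F` and `G` are representable, and, under (a choice of)
representing isomorphisms, the map of presheaves `w : F ⟶ G` corresponds to a cover in `C`.
(Covers are stable under pre- and post-composition with isomorphisms, so this does not depend on the
choice of representation.) -/
def RepCover (cov : CoversOn C) {F G : Cᵒᵖ ⥤ Type v} (w : F ⟶ G) : Prop :=
  ∃ (A B : C) (g : A ⟶ B) (eA : yoneda.obj A ≅ F) (eB : yoneda.obj B ≅ G),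
    cov.isCover g ∧ eA.hom ≫ w = yoneda.map g ≫ eB.hom

/-- A simplicial object of `C`, regarded as a simplicial presheaf via the Yoneda embedding. -/
abbrev ev (X : SimplicialObject C) : SimplicialObject (Cᵒᵖ ⥤ Type v) :=
  X ⋙ yoneda

/-- A morphism of simplicial objects of `C`, regarded as a morphism of simplicial presheaves. -/
abbrev evMap {X Y : SimplicialObject C} (f : X ⟶ Y) : ev X ⟶ ev Y :=
  Functor.whiskerRight f yoneda

/-- The relative horn object `Λⁿ_i(φ) := Λⁿ_i F ×_{Λⁿ_i G} G_n`. -/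
abbrev hornObj (n : ℕ) (i : Fin (n + 1)) {F G : SimplicialObject (Cᵒᵖ ⥤ Type v)} (φ : F ⟶ G) :
    Cᵒᵖ ⥤ Type v :=
  relObj ((SSet.horn n i).ι) φ

/-- The relative horn-filling map `λⁿ_i(φ) : F_n ⟶ Λⁿ_i(φ)`. -/
abbrev hornMap (n : ℕ) (i : Fin (n + 1)) {F G : SimplicialObject (Cᵒᵖ ⥤ Type v)} (φ : F ⟶ G) :
    F.obj (op (SimplexCategory.mk n)) ⟶ hornObj n i φ :=
  relMap ((SSet.horn n i).ι) φ

/-- The relative matching object `Mₙ(φ) := Mₙ F ×_{Mₙ G} G_n`. -/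
abbrev matchObj (n : ℕ) {F G : SimplicialObject (Cᵒᵖ ⥤ Type v)} (φ : F ⟶ G) :
    Cᵒᵖ ⥤ Type v :=
  relObj ((SSet.boundary n).ι) φ

/-- The relative boundary-filling map `μₙ(φ) : F_n ⟶ Mₙ(φ)`. -/
abbrev matchMap (n : ℕ) {F G : SimplicialObject (Cᵒᵖ ⥤ Type v)} (φ : F ⟶ G) :
    F.obj (op (SimplexCategory.mk n)) ⟶ matchObj n φ :=
  relMap ((SSet.boundary n).ι) φ

/-- A morphism of simplicial presheaves is a *Kan fibration* (relative to the covers on `C`) if,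
for all `n ≥ 1` and all `0 ≤ i ≤ n`, the relative horn object `Λⁿ_i(φ)` is representable and the
horn-filling map `λⁿ_i(φ)` is (represented by) a cover. -/
def IsKanFibration (cov : CoversOn C) {F G : SimplicialObject (Cᵒᵖ ⥤ Type v)} (φ : F ⟶ G) :
    Prop :=
  ∀ (n : ℕ) (i : Fin (n + 2)), RepCover cov (hornMap (n + 1) i φ)

/-- A morphism of simplicial presheaves is an *`N`-stack* if it is a Kan fibration and the
horn-filling maps `λᵏ_i(φ)` are isomorphisms for all `k > N`. -/
def IsStack (cov : CoversOn C) (N : ℕ) {F G : SimplicialObject (Cᵒᵖ ⥤ Type v)} (φ : F ⟶ G) :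
    Prop :=
  IsKanFibration cov φ ∧
    ∀ (k : ℕ) (i : Fin (k + 2)), N < k + 1 → IsIso (hornMap (k + 1) i φ)

lemma sHomMap_comp (K : SSet.{v}) {F G H : SimplicialObject (Cᵒᵖ ⥤ Type v)}
    (φ : F ⟶ G) (ψ : G ⟶ H) :
    sHomMap K (φ ≫ ψ) = sHomMap K φ ≫ sHomMap K ψ := by
  apply NatTrans.ext
  ext U ξ
  apply Subtype.ext
  funext j a
  rfl

/-- For an inclusion of simplicial sets `u : S ⟶ T` and a morphism `ψ : G ⟶ H` of simplicial
presheaves, the object `(S ↪ T)(ψ) := hom(S, G) ×_{hom(S, H)} hom(T, H)`. -/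
def pairObj {G H : SimplicialObject (Cᵒᵖ ⥤ Type v)} (ψ : G ⟶ H) {S T : SSet.{v}} (u : S ⟶ T) :
    Cᵒᵖ ⥤ Type v :=
  cpb (sHomMap S ψ) (sHomRes u H)

/-- The map `f_* : (S ↪ T)(ψ ∘ φ) ⟶ (S ↪ T)(ψ)` induced by `φ`. -/
def pairMap {F G H : SimplicialObject (Cᵒᵖ ⥤ Type v)} (φ : F ⟶ G) (ψ : G ⟶ H)
    {S T : SSet.{v}} (u : S ⟶ T) : pairObj (φ ≫ ψ) u ⟶ pairObj ψ u :=
  cpbMap (sHomMap S φ) (𝟙 _) (𝟙 _)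
    (by rw [Category.comp_id, sHomMap_comp])
    (by rw [Category.comp_id, Category.id_comp])

/-- `DimLE S d` says that the simplicial set `S` is at most `d`-dimensional: every simplex of
dimension `> d` is degenerate. -/
def DimLE (S : SSet.{v}) (d : ℕ) : Prop :=
  ∀ (m : ℕ), d < m + 1 → ∀ x : S.obj (op (SimplexCategory.mk (m + 1))),
    ∃ (k : Fin (m + 1)) (y : S.obj (op (SimplexCategory.mk m))),
      x = S.map (SimplexCategory.σ k).op y

end CatCov

section SimplicialAux

open CatCov SimplexCategory

variable {C : Type u} [Category.{v} C]

lemma sHom_ext' {K : SSet.{v}} {W : SimplicialObject (Cᵒᵖ ⥤ Type v)} {U : Cᵒᵖ}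
    {ξ η : (sHom K W).obj U} (h : ∀ j a, ξ.1 j a = η.1 j a) : ξ = η :=
  Subtype.ext (funext fun j => funext fun a => h j a)

lemma typeHom_ext' {X Y : Type v} {f g : X ⟶ Y} (h : ∀ x, f x = g x) : f = g := by
  ext x
  exact h x

lemma sHomRes_comp' {K L M : SSet.{v}} (u : K ⟶ L) (v : L ⟶ M)
    (W : SimplicialObject (Cᵒᵖ ⥤ Type v)) :
    sHomRes v W ≫ sHomRes u W = sHomRes (u ≫ v) W := rfl

lemma sHomMap_sHomRes {K L : SSet.{v}} (i : K ⟶ L) {F G : SimplicialObject (Cᵒᵖ ⥤ Type v)}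
    (φ : F ⟶ G) : sHomMap L φ ≫ sHomRes i G = sHomRes i F ≫ sHomMap K φ := rfl

/-- The top-dimensional simplex of the standard simplex. -/
def Δtop (n : SimplexCategory) : (SSet.stdSimplex.obj n).obj (op n) := ULift.up (𝟙 n)

lemma stdSimplex_map_top {n : SimplexCategory} {j : SimplexCategoryᵒᵖ}
    (c : (SSet.stdSimplex.obj n).obj j) :
    (SSet.stdSimplex.obj n).map c.down.op (Δtop n) = c := by
  show ULift.up (c.down.op.unop ≫ 𝟙 n) = c
  rw [Quiver.Hom.unop_op, Category.comp_id]
  rfl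

lemma natTrans_app_eq {L : SSet.{v}} {n : SimplexCategory} (b : SSet.stdSimplex.obj n ⟶ L)
    {j : SimplexCategoryᵒᵖ} (c : (SSet.stdSimplex.obj n).obj j) :
    b.app j c = L.map c.down.op (b.app (op n) (Δtop n)) := by
  conv_lhs => rw [← stdSimplex_map_top c]
  exact ConcreteCategory.congr_hom (b.naturality c.down.op) (Δtop n)

lemma sHom_eval_eq {W : SimplicialObject (Cᵒᵖ ⥤ Type v)} {K : SSet.{v}} {U : Cᵒᵖ}
    (ξ : (sHom K W).obj U) {n : SimplexCategory} (t : K.obj (op n)) {j : SimplexCategoryᵒᵖ}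
    (c : (SSet.stdSimplex.obj n).obj j) :
    ξ.1 j (K.map c.down.op t) = (W.map c.down.op).app U (ξ.1 (op n) t) :=
  ξ.2 _ _ _ _

lemma horn_app_injective (n : ℕ) (i : Fin (n + 1)) (j : SimplexCategoryᵒᵖ) :
    Function.Injective (((SSet.horn n i).ι).app j) :=
  fun _ _ h => Subtype.ext h

lemma top_not_in_horn {n : ℕ} (i : Fin (n + 2)) (lc : (Λ[n + 1, i] : SSet).obj (op (SimplexCategory.mk (n + 1)))) :
    ((SSet.horn (n + 1) i).ι).app _ lc ≠ Δtop (SimplexCategory.mk (n + 1)) := by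
  intro h
  apply lc.2
  have h1 : lc.1 = Δtop (SimplexCategory.mk (n + 1)) := h
  rw [h1]
  rw [Set.eq_univ_iff_forall]
  intro x
  left
  exact ⟨x, rfl⟩

lemma top_not_degenerate {n : ℕ} (k : Fin (n + 1)) (c : Δ[n + 1].obj (op (SimplexCategory.mk n))) :
    Δ[n + 1].map (SimplexCategory.σ k).op c ≠ Δtop (SimplexCategory.mk (n + 1)) := by
  intro h
  have h2 : (SimplexCategory.σ k) ≫ c.down = 𝟙 _ := congrArg ULift.down h
  have h3 := DFunLike.congr_fun (congrArg SimplexCategory.Hom.toOrderHom h2) (Fin.castSucc k)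
  have h4 := DFunLike.congr_fun (congrArg SimplexCategory.Hom.toOrderHom h2) (Fin.succ k)
  replace h3 : (SimplexCategory.Hom.toOrderHom c.down)
      ((SimplexCategory.Hom.toOrderHom (σ k)) (Fin.castSucc k)) =
      (SimplexCategory.Hom.toOrderHom (𝟙 (SimplexCategory.mk (n+1)))) (Fin.castSucc k) := h3
  replace h4 : (SimplexCategory.Hom.toOrderHom c.down)
      ((SimplexCategory.Hom.toOrderHom (σ k)) (Fin.succ k)) =
      (SimplexCategory.Hom.toOrderHom (𝟙 (SimplexCategory.mk (n+1)))) (Fin.succ k) := h4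
  have hc1 : (SimplexCategory.σ k).toOrderHom (Fin.castSucc k) = k := by
    show k.predAbove k.castSucc = k
    rw [Fin.predAbove_castSucc_self]
  have hc2 : (SimplexCategory.σ k).toOrderHom (Fin.succ k) = k := by
    show k.predAbove k.succ = k
    rw [Fin.predAbove_succ_self]
  rw [hc1] at h3
  rw [hc2] at h4
  have h5 : (SimplexCategory.Hom.toOrderHom (𝟙 (SimplexCategory.mk (n+1)))) (Fin.castSucc k) =
      Fin.castSucc k := rfl
  have h6 : (SimplexCategory.Hom.toOrderHom (𝟙 (SimplexCategory.mk (n+1)))) (Fin.succ k) =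
      Fin.succ k := rfl
  rw [h5] at h3
  rw [h6] at h4
  rw [h4] at h3
  exact (Fin.castSucc_lt_succ (i := k)).ne h3.symm

section TypePushout

variable {Z X Y P : Type v} {i : Z ⟶ X} {a : Z ⟶ Y} {b : X ⟶ P} {jm : Y ⟶ P}

lemma typePushout_jointSurj (hpo : IsPushout i a b jm) (y : P) : (∃ c, b c = y) ∨ (∃ z, jm z = y) := by
  let s : P ⟶ {y : P // (∃ c, b c = y) ∨ (∃ z, jm z = y)} :=
    hpo.desc (TypeCat.ofHom fun x => ⟨b x, Or.inl ⟨x, rfl⟩⟩) (TypeCat.ofHom fun z => ⟨jm z, Or.inr ⟨z, rfl⟩⟩)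
      (typeHom_ext' fun l => Subtype.ext (by exact ConcreteCategory.congr_hom hpo.w l))
  have hs : s ≫ TypeCat.ofHom Subtype.val = 𝟙 P := by
    apply hpo.hom_ext
    · rw [← Category.assoc, hpo.inl_desc]
      rfl
    · rw [← Category.assoc, hpo.inr_desc]
      rfl
  have h1 : (s y).1 = y := by have := ConcreteCategory.congr_hom hs y; exact this
  have h2 := (s y).2
  rwa [h1] at h2

lemma typePushout_not_mix (hpo : IsPushout i a b jm) {x : X} {z : Y} (h : b x = jm z) : ∃ l, i l = x := by
  classical
  by_contra hno
  let v : X ⟶ Option {x : X // ¬ ∃ l, i l = x} :=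
    TypeCat.ofHom fun x => if h : ∃ l, i l = x then none else some ⟨x, h⟩
  let u : Y ⟶ Option {x : X // ¬ ∃ l, i l = x} := TypeCat.ofHom fun _ => none
  have hcomm : i ≫ v = a ≫ u := typeHom_ext' fun l => by
    have hv : v (i l) = none := dif_pos ⟨l, rfl⟩
    show v (i l) = u (a l)
    rw [hv]
    rfl
  have hb : v x = u z := by
    have h1 : hpo.desc v u hcomm (b x) = v x := ConcreteCategory.congr_hom (hpo.inl_desc v u hcomm) x
    have h2 : hpo.desc v u hcomm (jm z) = u z := ConcreteCategory.congr_hom (hpo.inr_desc v u hcomm) z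
    have h3 : hpo.desc v u hcomm (b x) = hpo.desc v u hcomm (jm z) := congrArg _ h
    rw [h1, h2] at h3
    exact h3
  rw [show v x = some ⟨x, hno⟩ from dif_neg hno] at hb
  exact Option.some_ne_none _ hb

lemma typePushout_b_inj (hpo : IsPushout i a b jm) {x x' : X} (h : b x = b x') (hx : ¬ ∃ l, i l = x) : x = x' := by
  classical
  let v : X ⟶ Option {x : X // ¬ ∃ l, i l = x} :=
    TypeCat.ofHom fun x => if h : ∃ l, i l = x then none else some ⟨x, h⟩
  let u : Y ⟶ Option {x : X // ¬ ∃ l, i l = x} := TypeCat.ofHom fun _ => none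
  have hcomm : i ≫ v = a ≫ u := typeHom_ext' fun l => by
    have hv : v (i l) = none := dif_pos ⟨l, rfl⟩
    show v (i l) = u (a l)
    rw [hv]
    rfl
  have hb : v x = v x' := by
    have h1 : hpo.desc v u hcomm (b x) = v x := ConcreteCategory.congr_hom (hpo.inl_desc v u hcomm) x
    have h2 : hpo.desc v u hcomm (b x') = v x' := ConcreteCategory.congr_hom (hpo.inl_desc v u hcomm) x'
    have h3 : hpo.desc v u hcomm (b x) = hpo.desc v u hcomm (b x') := congrArg _ h
    rw [h1, h2] at h3
    exact h3
  rw [show v x = some ⟨x, hx⟩ from dif_neg hx] at hb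
  by_cases hx' : ∃ l, i l = x'
  · rw [show v x' = none from dif_pos hx'] at hb
    exact absurd hb (Option.some_ne_none _)
  · rw [show v x' = some ⟨x', hx'⟩ from dif_neg hx'] at hb
    exact congrArg Subtype.val (Option.some.inj hb)

lemma typePushout_inr_injective (hpo : IsPushout i a b jm) (hi : Function.Injective i) : Function.Injective jm := by
  classical
  let v : X ⟶ Y ⊕ X := TypeCat.ofHom fun x => if h : ∃ l, i l = x then Sum.inl (a h.choose) else Sum.inr x
  let u : Y ⟶ Y ⊕ X := TypeCat.ofHom Sum.inl
  have hcomm : i ≫ v = a ≫ u := typeHom_ext' fun l => by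
    have hex : ∃ l', i l' = i l := ⟨l, rfl⟩
    have hv : v (i l) = Sum.inl (a hex.choose) := dif_pos hex
    show v (i l) = u (a l)
    rw [hv, hi hex.choose_spec]
    rfl
  intro z z' h
  have h1 : hpo.desc v u hcomm (jm z) = u z := ConcreteCategory.congr_hom (hpo.inr_desc v u hcomm) z
  have h2 : hpo.desc v u hcomm (jm z') = u z' := ConcreteCategory.congr_hom (hpo.inr_desc v u hcomm) z'
  have h3 : hpo.desc v u hcomm (jm z) = hpo.desc v u hcomm (jm z') := congrArg _ h
  rw [h1, h2] at h3
  exact Sum.inl.inj h3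

end TypePushout

lemma degen_transfer {K L : SSet.{v}} (jm : K ⟶ L) (hinj : ∀ o, Function.Injective (jm.app o))
    {m : ℕ} (k : Fin (m + 1)) (x : K.obj (op (SimplexCategory.mk (m + 1))))
    (y : L.obj (op (SimplexCategory.mk m)))
    (h : jm.app _ x = L.map (SimplexCategory.σ k).op y) :
    ∃ w, x = K.map (SimplexCategory.σ k).op w := by
  refine ⟨K.map (SimplexCategory.δ k.succ).op x, ?_⟩
  apply hinj
  have hin : L.map (SimplexCategory.δ k.succ).op (L.map (SimplexCategory.σ k).op y) = y := by
    rw [← FunctorToTypes.map_comp_apply, ← op_comp, SimplexCategory.δ_comp_σ_succ, op_id,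
      FunctorToTypes.map_id_apply]
  rw [FunctorToTypes.naturality, FunctorToTypes.naturality, h, hin]

end SimplicialAux

namespace CatCov

variable {C : Type u} [Category.{v} C]

lemma isCover_of_isIso (cov : CoversOn C) {A B : C} (e : A ⟶ B) [IsIso e] :
    cov.isCover e :=
  cov.isCover_of_isPullback
    (IsPullback.of_horiz_isIso ⟨by simp⟩ : IsPullback e e (𝟙 B) (𝟙 B)) (cov.isCover_id B)

lemma RepCover.src_rep {cov : CoversOn C} {F G : Cᵒᵖ ⥤ Type v} {w : F ⟶ G}
    (h : RepCover cov w) : F.IsRepresentable := by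
  obtain ⟨A, B, g, eA, eB, -, -⟩ := h
  exact Functor.IsRepresentable.mk' eA

lemma RepCover.comp {cov : CoversOn C} {F G H : Cᵒᵖ ⥤ Type v} {w₁ : F ⟶ G} {w₂ : G ⟶ H}
    (h1 : RepCover cov w₁) (h2 : RepCover cov w₂) : RepCover cov (w₁ ≫ w₂) := by
  obtain ⟨A, B, g, eA, eB, hc, sq1⟩ := h1
  obtain ⟨B', D, g', eB', eD, hc', sq2⟩ := h2
  let k : B ⟶ B' := yoneda.preimage (eB.hom ≫ eB'.inv)
  have hk : yoneda.map k = eB.hom ≫ eB'.inv := Functor.map_preimage _ _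
  have : IsIso (yoneda.map k) := by rw [hk]; infer_instance
  have : IsIso k := isIso_of_reflects_iso k yoneda
  refine ⟨A, D, g ≫ k ≫ g', eA, eD,
    cov.isCover_comp hc (cov.isCover_comp (isCover_of_isIso cov k) hc'), ?_⟩
  have hkB : yoneda.map k ≫ eB'.hom = eB.hom := by rw [hk]; simp
  rw [← Category.assoc, sq1, Category.assoc, ← hkB]
  simp only [Functor.map_comp, Category.assoc, sq2]

lemma RepCover.iso_comp {cov : CoversOn C} {F' F G : Cᵒᵖ ⥤ Type v} (θ : F' ⟶ F) [IsIso θ]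
    {w : F ⟶ G} (h : RepCover cov w) : RepCover cov (θ ≫ w) := by
  obtain ⟨A, B, g, eA, eB, hc, sq⟩ := h
  refine ⟨A, B, g, eA ≪≫ (asIso θ).symm, eB, hc, ?_⟩
  simpa using sq

@[simp]
lemma cpbLift_fst {E F G H : Cᵒᵖ ⥤ Type v} {α : F ⟶ H} {β : G ⟶ H}
    (p : E ⟶ F) (q : E ⟶ G) (w : p ≫ α = q ≫ β) : cpbLift p q w ≫ cpbFst α β = p := rfl

@[simp]
lemma cpbLift_snd {E F G H : Cᵒᵖ ⥤ Type v} {α : F ⟶ H} {β : G ⟶ H}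
    (p : E ⟶ F) (q : E ⟶ G) (w : p ≫ α = q ≫ β) : cpbLift p q w ≫ cpbSnd α β = q := rfl

/-- Key representability lemma: the concrete pullback of a representable cover along a map
of representable presheaves is representable, and the first projection is a representable
cover. -/
lemma repCover_cpbFst (cov : CoversOn C) {F G H : Cᵒᵖ ⥤ Type v} (α : F ⟶ H) {β : G ⟶ H}
    (hF : F.IsRepresentable) (hβ : RepCover cov β) : RepCover cov (cpbFst α β) := by
  haveI := hF
  obtain ⟨B, D, c, eB, eD, hc, sq⟩ := hβ
  let eA : yoneda.obj F.reprX ≅ F := F.reprW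
  let a : F.reprX ⟶ D := yoneda.preimage (eA.hom ≫ α ≫ eD.inv)
  have ha : yoneda.map a ≫ eD.hom = eA.hom ≫ α := by
    rw [Functor.map_preimage]; simp
  haveI : HasPullback a c := cov.hasPullback_of_isCover a hc
  have hw : (yoneda.map (pullback.fst a c) ≫ eA.hom) ≫ α =
      (yoneda.map (pullback.snd a c) ≫ eB.hom) ≫ β := by
    rw [Category.assoc, ← ha, Category.assoc, sq, ← Category.assoc, ← Category.assoc,
      ← Functor.map_comp, ← Functor.map_comp, pullback.condition]
  let θ : yoneda.obj (pullback a c) ⟶ cpb α β :=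
    cpbLift (yoneda.map (pullback.fst a c) ≫ eA.hom) (yoneda.map (pullback.snd a c) ≫ eB.hom) hw
  have hbij : ∀ U, Function.Bijective (θ.app U) := by
    intro U
    constructor
    · intro l l' hll
      have h1 : eA.hom.app U ((yoneda.map (pullback.fst a c)).app U l) =
          eA.hom.app U ((yoneda.map (pullback.fst a c)).app U l') :=
        congrArg (fun (p : (cpb α β).obj U) => p.1.1) hll
      have h2 : eB.hom.app U ((yoneda.map (pullback.snd a c)).app U l) =
          eB.hom.app U ((yoneda.map (pullback.snd a c)).app U l') :=
        congrArg (fun (p : (cpb α β).obj U) => p.1.2) hll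
      have hAinj : Function.Injective (eA.hom.app U) :=
        ((isIso_iff_bijective _).1 inferInstance).injective
      have hBinj : Function.Injective (eB.hom.app U) :=
        ((isIso_iff_bijective _).1 inferInstance).injective
      exact pullback.hom_ext (hAinj h1) (hBinj h2)
    · rintro ⟨⟨pF, pG⟩, hpq⟩
      let u₁ : U.unop ⟶ F.reprX := eA.inv.app U pF
      let u₂ : U.unop ⟶ B := eB.inv.app U pG
      have hDinj : Function.Injective (eD.hom.app U) :=
        ((isIso_iff_bijective _).1 inferInstance).injective
      have hcond : u₁ ≫ a = u₂ ≫ c := by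
        apply hDinj
        have e1 : eD.hom.app U ((yoneda.map a).app U u₁) = α.app U (eA.hom.app U u₁) :=
          ConcreteCategory.congr_hom (NatTrans.congr_app ha U) u₁
        have e2 : eD.hom.app U ((yoneda.map c).app U u₂) = β.app U (eB.hom.app U u₂) := by
          have := ConcreteCategory.congr_hom (NatTrans.congr_app sq U) u₂
          dsimp at this ⊢
          rw [← this]
        show eD.hom.app U ((yoneda.map a).app U u₁) = eD.hom.app U ((yoneda.map c).app U u₂)
        rw [e1, e2]
        rw [Iso.inv_hom_id_app_apply eA, Iso.inv_hom_id_app_apply eB]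
        exact hpq
      refine ⟨pullback.lift u₁ u₂ hcond, ?_⟩
      apply Subtype.ext
      apply Prod.ext
      · show eA.hom.app U (pullback.lift u₁ u₂ hcond ≫ pullback.fst a c) = pF
        rw [pullback.lift_fst]
        exact Iso.inv_hom_id_app_apply eA U pF
      · show eB.hom.app U (pullback.lift u₁ u₂ hcond ≫ pullback.snd a c) = pG
        rw [pullback.lift_snd]
        exact Iso.inv_hom_id_app_apply eB U pG
  haveI : ∀ U, IsIso (θ.app U) := fun U => (isIso_iff_bijective _).2 (hbij U)
  haveI : IsIso θ := NatIso.isIso_of_isIso_app θ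
  refine ⟨pullback a c, F.reprX, pullback.fst a c, asIso θ, eA,
    cov.isCover_of_isPullback (IsPullback.of_hasPullback a c) hc, ?_⟩
  show θ ≫ cpbFst α β = yoneda.map (pullback.fst a c) ≫ eA.hom
  rfl

section MainSteps

variable {C : Type u} [Category.{v} C]

/-- Base case: over a filtration stage isomorphic to `Δ[0]`, the induced map on relative
pair objects is a representable cover. -/
lemma base_step (cov : CoversOn C) {X Y Z : SimplicialObject C} (f : X ⟶ Y) (h : Y ⟶ Z)
    {A0 T : SSet.{v}} (e0 : Δ[0] ≅ A0) (u0 : A0 ⟶ T)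
    (hf0 : cov.isCover (f.app (op (SimplexCategory.mk 0))))
    (hrep0 : (pairObj (evMap h) u0).IsRepresentable) :
    RepCover cov (pairMap (evMap f) (evMap h) u0) := by
  classical
  set v₀ : A0.obj (op (SimplexCategory.mk 0)) :=
    e0.hom.app (op (SimplexCategory.mk 0)) (Δtop (SimplexCategory.mk 0)) with hv₀
  -- every simplex of `A0` is the image of `v₀` under the unique map to `[0]`
  have hA0 : ∀ (j : SimplexCategoryᵒᵖ) (y : A0.obj j),
      y = A0.map (SimplexCategory.const j.unop (SimplexCategory.mk 0) 0).op v₀ := by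
    intro j y
    have h1 : e0.hom.app j
        (Δ[0].map ((e0.inv.app j y).down).op (Δtop (SimplexCategory.mk 0))) = y := by
      rw [stdSimplex_map_top]
      exact Iso.inv_hom_id_app_apply e0 j y
    have h2 : e0.hom.app j
        (Δ[0].map ((e0.inv.app j y).down).op (Δtop (SimplexCategory.mk 0))) =
        A0.map ((e0.inv.app j y).down).op v₀ :=
      NatTrans.naturality_apply e0.hom _ _
    have h3 : (e0.inv.app j y).down = SimplexCategory.const j.unop (SimplexCategory.mk 0) 0 :=
      @Subsingleton.elim (j.unop ⟶ SimplexCategory.mk 0) (by infer_instance) _ _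
    rw [← h1, h2, h3]
  have hEval0 : ∀ (W : SimplicialObject (Cᵒᵖ ⥤ Type v)) (U : Cᵒᵖ) (ξ : (sHom A0 W).obj U)
      (j : SimplexCategoryᵒᵖ) (y : A0.obj j),
      ξ.1 j y = (W.map (SimplexCategory.const j.unop (SimplexCategory.mk 0) 0).op).app U
        (ξ.1 (op (SimplexCategory.mk 0)) v₀) := by
    intro W U ξ j y
    conv_lhs => rw [hA0 j y]
    exact ξ.2 _ _ _ _
  -- the evaluation map to `Y₀`
  let q₀ : pairObj (evMap h) u0 ⟶ (ev Y).obj (op (SimplexCategory.mk 0)) :=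
    { app := fun U => TypeCat.ofHom fun p => p.1.1.1 (op (SimplexCategory.mk 0)) v₀
      naturality := by intro U V u; ext p; rfl }
  have hφ0 : RepCover cov ((evMap f).app (op (SimplexCategory.mk 0))) :=
    ⟨X.obj (op (SimplexCategory.mk 0)), Y.obj (op (SimplexCategory.mk 0)),
      f.app (op (SimplexCategory.mk 0)), Iso.refl _, Iso.refl _, hf0, by simp⟩
  have hcov₀ : RepCover cov (cpbFst q₀ ((evMap f).app (op (SimplexCategory.mk 0)))) :=
    repCover_cpbFst cov q₀ hrep0 hφ0
  -- the comparison map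
  let Θ : pairObj (evMap f ≫ evMap h) u0 ⟶ cpb q₀ ((evMap f).app (op (SimplexCategory.mk 0))) :=
    { app := fun U => TypeCat.ofHom fun pp =>
        ⟨(⟨(((sHomMap A0 (evMap f)).app U pp.1.1), pp.1.2), pp.2⟩,
          pp.1.1.1 (op (SimplexCategory.mk 0)) v₀), rfl⟩
      naturality := by
        intro U V u
        ext pp
        apply Subtype.ext
        apply Prod.ext
        · apply Subtype.ext
          apply Prod.ext
          · apply sHom_ext'
            intro j y
            exact NatTrans.naturality_apply ((evMap f).app j) u (pp.1.1.1 j y)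
          · rfl
        · rfl }
  have hbij : ∀ U, Function.Bijective (Θ.app U) := by
    intro U
    constructor
    · rintro ⟨⟨ζ, τ⟩, mem⟩ ⟨⟨ζ', τ'⟩, mem'⟩ hEq
      have hv := congrArg Subtype.val hEq
      have hx : ζ.1 (op (SimplexCategory.mk 0)) v₀ = ζ'.1 (op (SimplexCategory.mk 0)) v₀ :=
        congrArg Prod.snd hv
      have hτ : τ = τ' := congrArg (fun r => r.1.1.2) hv
      apply Subtype.ext
      apply Prod.ext
      · apply sHom_ext'
        intro j y
        rw [hEval0 (ev X) U ζ j y, hEval0 (ev X) U ζ' j y, hx]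
      · exact hτ
    · rintro ⟨⟨⟨⟨ζh, τ⟩, memh⟩, x⟩, condR⟩
      have hζhv : ζh.1 (op (SimplexCategory.mk 0)) v₀ =
          ((evMap f).app (op (SimplexCategory.mk 0))).app U x := condR
      -- construct the preimage
      refine ⟨⟨(⟨fun j y =>
        ((ev X).map (SimplexCategory.const j.unop (SimplexCategory.mk 0) 0).op).app U x, ?_⟩, τ),
        ?_⟩, ?_⟩
      · intro j j' β y
        dsimp only
        have hco : (SimplexCategory.const j.unop (SimplexCategory.mk 0) 0).op ≫ β =
            (SimplexCategory.const j'.unop (SimplexCategory.mk 0) 0).op := by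
          apply Quiver.Hom.unop_inj
          exact Subsingleton.elim _ _
        rw [← hco, Functor.map_comp]
        rfl
      · -- membership in the pair object
        apply sHom_ext'
        intro j y
        show ((evMap f ≫ evMap h).app j).app U
            (((ev X).map (SimplexCategory.const j.unop (SimplexCategory.mk 0) 0).op).app U x) =
          τ.1 j (u0.app j y)
        have hnat : ((evMap f ≫ evMap h).app j).app U
            (((ev X).map (SimplexCategory.const j.unop (SimplexCategory.mk 0) 0).op).app U x) =
            ((ev Z).map (SimplexCategory.const j.unop (SimplexCategory.mk 0) 0).op).app U
              (((evMap f ≫ evMap h).app (op (SimplexCategory.mk 0))).app U x) :=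
          ConcreteCategory.congr_hom (NatTrans.congr_app ((evMap f ≫ evMap h).naturality
            (SimplexCategory.const j.unop (SimplexCategory.mk 0) 0).op) U) x
        rw [hnat]
        have hy := hA0 j y
        have hu0y : u0.app j y =
            T.map (SimplexCategory.const j.unop (SimplexCategory.mk 0) 0).op
              (u0.app (op (SimplexCategory.mk 0)) v₀) := by
          conv_lhs => rw [hy]
          exact NatTrans.naturality_apply u0 _ _
        rw [hu0y, τ.2]
        refine congrArg (((ev Z).map
          (SimplexCategory.const j.unop (SimplexCategory.mk 0) 0).op).app U) ?_
        have hm := congrFun (congrFun (congrArg Subtype.val memh) (op (SimplexCategory.mk 0))) v₀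
        show ((evMap h).app (op (SimplexCategory.mk 0))).app U
            (((evMap f).app (op (SimplexCategory.mk 0))).app U x) = _
        rw [← hζhv]
        exact hm
      · -- the image is the given element
        apply Subtype.ext
        apply Prod.ext
        · apply Subtype.ext
          apply Prod.ext
          · apply sHom_ext'
            intro j y
            show ((evMap f).app j).app U
              (((ev X).map (SimplexCategory.const j.unop (SimplexCategory.mk 0) 0).op).app U x) =
              ζh.1 j y
            have hnat : ((evMap f).app j).app U
                (((ev X).map (SimplexCategory.const j.unop (SimplexCategory.mk 0) 0).op).app U x) =
                ((ev Y).map (SimplexCategory.const j.unop (SimplexCategory.mk 0) 0).op).app U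
                  (((evMap f).app (op (SimplexCategory.mk 0))).app U x) :=
              ConcreteCategory.congr_hom (NatTrans.congr_app ((evMap f).naturality
                (SimplexCategory.const j.unop (SimplexCategory.mk 0) 0).op) U) x
            rw [hnat, ← hζhv]
            exact (hEval0 (ev Y) U ζh j y).symm
          · rfl
        · show ((ev X).map (SimplexCategory.const (SimplexCategory.mk 0)
            (SimplexCategory.mk 0) 0).op).app U x = x
          have : (SimplexCategory.const (SimplexCategory.mk 0) (SimplexCategory.mk 0) 0) =
              𝟙 (SimplexCategory.mk 0) := Subsingleton.elim _ _
          rw [this, op_id, CategoryTheory.Functor.map_id]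
          rfl
  haveI : ∀ U, IsIso (Θ.app U) := fun U => (isIso_iff_bijective _).2 (hbij U)
  haveI : IsIso Θ := NatIso.isIso_of_isIso_app Θ
  have hfact : pairMap (evMap f) (evMap h) u0 =
      Θ ≫ cpbFst q₀ ((evMap f).app (op (SimplexCategory.mk 0))) := rfl
  rw [hfact]
  exact RepCover.iso_comp Θ hcov₀

/-- Inductive step: attaching a horn-pushout cell to the filtration stage preserves the
representable-cover property of the induced map on relative pair objects. -/
lemma ind_step (cov : CoversOn C) {X Y Z : SimplicialObject C} (f : X ⟶ Y) (h : Y ⟶ Z)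
    {Ap Ap1 T : SSet.{v}} {m : ℕ} {q : Fin (m + 2)} {a : (Λ[m + 1, q] : SSet) ⟶ Ap}
    {b : Δ[m + 1] ⟶ Ap1} {jm : Ap ⟶ Ap1}
    (sq : IsPushout ((SSet.horn (m + 1) q).ι) a b jm)
    (up : Ap ⟶ T) (up1 : Ap1 ⟶ T) (huu : jm ≫ up1 = up)
    (hh : RepCover cov (hornMap (m + 1) q (evMap f)))
    (hrep1 : (pairObj (evMap h) up1).IsRepresentable)
    (ih : RepCover cov (pairMap (evMap f) (evMap h) up)) :
    RepCover cov (pairMap (evMap f) (evMap h) up1) := by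
  classical
  let n1 := SimplexCategory.mk (m + 1)
  let ι := (SSet.horn (m + 1) q).ι
  let btop := b.app (op n1) (Δtop n1)
  have hpoL : ∀ j, IsPushout (ι.app j) (a.app j) (b.app j) (jm.app j) := by
    intro j
    have hmap := sq.map ((evaluation SimplexCategoryᵒᵖ (Type v)).obj j)
    exact hmap
  have hsqw : ∀ (j : SimplexCategoryᵒᵖ) (c : (Λ[m + 1, q] : SSet).obj j),
      b.app j (ι.app j c) = jm.app j (a.app j c) := by
    intro j c
    have hw := ConcreteCategory.congr_hom (congrArg (fun (t : (Λ[m + 1, q] : SSet) ⟶ Ap1) => t.app j) sq.w) c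
    exact hw
  -- restriction map on the pair objects over `h`
  let rh : pairObj (evMap h) up1 ⟶ pairObj (evMap h) up :=
    cpbMap (sHomRes jm (ev Y)) (𝟙 (sHom T (ev Z))) (sHomRes jm (ev Z))
      (sHomMap_sHomRes jm (evMap h))
      (by rw [sHomRes_comp', huu, Category.id_comp])
  have hQ : RepCover cov (cpbFst rh (pairMap (evMap f) (evMap h) up)) :=
    repCover_cpbFst cov rh hrep1 ih
  -- the map from `Q` to the relative horn object
  let q₁ : cpb rh (pairMap (evMap f) (evMap h) up) ⟶ hornObj (m + 1) q (evMap f) :=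
    { app := fun U => TypeCat.ofHom fun P =>
        ⟨((sHomRes a (ev X)).app U P.1.2.1.1, P.1.1.1.1.1 (op n1) btop), by
          have hval := congrArg Subtype.val P.2
          have h1 : ∀ (j : SimplexCategoryᵒᵖ) (y : Ap.obj j),
              P.1.1.1.1.1 j (jm.app j y) = ((evMap f).app j).app U (P.1.2.1.1.1 j y) :=
            fun j y => congrFun (congrFun (congrArg Subtype.val (congrArg Prod.fst hval)) j) y
          apply sHom_ext'
          intro j c
          show ((evMap f).app j).app U (P.1.2.1.1.1 j (a.app j c)) =
            ((ev Y).map ((ι.app j c).down.op)).app U (P.1.1.1.1.1 (op n1) btop)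
          rw [← P.1.1.1.1.2 (op n1) j ((ι.app j c).down.op) btop]
          have hb1 : Ap1.map ((ι.app j c).down.op) btop = b.app j (ι.app j c) :=
            (natTrans_app_eq b (ι.app j c)).symm
          rw [hb1, hsqw j c, h1]⟩
      naturality := by intro U V u; ext P; rfl }
  have hR : RepCover cov (cpbFst q₁ (hornMap (m + 1) q (evMap f))) :=
    repCover_cpbFst cov q₁ hQ.src_rep hh
  -- the comparison map
  let Θ : pairObj (evMap f ≫ evMap h) up1 ⟶ cpb q₁ (hornMap (m + 1) q (evMap f)) :=
    { app := fun U => TypeCat.ofHom fun pp =>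
        ⟨(⟨(⟨((sHomMap Ap1 (evMap f)).app U pp.1.1, pp.1.2), pp.2⟩,
          ⟨((sHomRes jm (ev X)).app U pp.1.1, pp.1.2), by
            apply sHom_ext'
            intro j y
            have hm := congrFun (congrFun (congrArg Subtype.val pp.2) j) (jm.app j y)
            have hu : up1.app j (jm.app j y) = up.app j y :=
              ConcreteCategory.congr_hom (congrArg (fun (t : Ap ⟶ T) => t.app j) huu) y
            show ((evMap f ≫ evMap h).app j).app U (pp.1.1.1 j (jm.app j y)) =
              pp.1.2.1 j (up.app j y)
            rw [← hu]
            exact hm⟩), rfl⟩, pp.1.1.1 (op n1) btop), by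
          apply Subtype.ext
          apply Prod.ext
          · apply sHom_ext'
            intro j c
            show pp.1.1.1 j (jm.app j (a.app j c)) =
              ((ev X).map ((ι.app j c).down.op)).app U (pp.1.1.1 (op n1) btop)
            rw [← hsqw j c, natTrans_app_eq b (ι.app j c)]
            exact pp.1.1.2 (op n1) j ((ι.app j c).down.op) btop
          · rfl⟩
      naturality := by
        intro U V u
        ext pp
        apply Subtype.ext
        apply Prod.ext
        · apply Subtype.ext
          apply Prod.ext
          · apply Subtype.ext
            apply Prod.ext
            · apply sHom_ext'
              intro j y
              exact NatTrans.naturality_apply ((evMap f).app j) u (pp.1.1.1 j y)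
            · rfl
          · rfl
        · rfl }
  have hbij : ∀ U, Function.Bijective (Θ.app U) := by
    intro U
    constructor
    · rintro ⟨⟨ζ, τ⟩, mem⟩ ⟨⟨ζ', τ'⟩, mem'⟩ hEq
      have hv := congrArg Subtype.val hEq
      have hx : ζ.1 (op n1) btop = ζ'.1 (op n1) btop := congrArg Prod.snd hv
      have hτ : τ = τ' := congrArg (fun r => r.1.1.1.1.2) hv
      have hres : ∀ (j : SimplexCategoryᵒᵖ) (y : Ap.obj j),
          ζ.1 j (jm.app j y) = ζ'.1 j (jm.app j y) :=
        fun j y => congrFun (congrFun (congrArg (fun r => r.1.1.2.1.1.1) hv) j) y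
      apply Subtype.ext
      apply Prod.ext
      · apply sHom_ext'
        intro j y
        rcases typePushout_jointSurj (hpoL j) y with ⟨c, hc⟩ | ⟨z, hz⟩
        · rw [← hc, natTrans_app_eq b c,
            ζ.2 (op n1) j (c.down.op) btop, ζ'.2 (op n1) j (c.down.op) btop, hx]
        · rw [← hz, hres]
      · exact hτ
    · intro rr
      obtain ⟨⟨Qel, x⟩, condR⟩ := rr
      obtain ⟨pq, condQ⟩ := Qel
      obtain ⟨ph, pg⟩ := pq
      have hval := congrArg Subtype.val condQ
      have h1 : ∀ (j : SimplexCategoryᵒᵖ) (y : Ap.obj j),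
          ph.1.1.1 j (jm.app j y) = ((evMap f).app j).app U (pg.1.1.1 j y) :=
        fun j y => congrFun (congrFun (congrArg Subtype.val (congrArg Prod.fst hval)) j) y
      have h2 : ph.1.2 = pg.1.2 := congrArg Prod.snd hval
      have hrval := congrArg Subtype.val condR
      have hr1 : ∀ (j : SimplexCategoryᵒᵖ) (c : (Λ[m + 1, q] : SSet).obj j),
          pg.1.1.1 j (a.app j c) = ((ev X).map ((ι.app j c).down.op)).app U x :=
        fun j c => congrFun (congrFun (congrArg Subtype.val (congrArg Prod.fst hrval)) j) c
      have hr2 : ph.1.1.1 (op n1) btop = ((evMap f).app (op n1)).app U x :=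
        congrArg Prod.snd hrval
      -- construct the glued simplicial map by the levelwise pushout property
      have hdesc : ∀ j, ∃ zfj : Ap1.obj j → ((ev X).obj j).obj U,
          (∀ c, zfj (b.app j c) = ((ev X).map c.down.op).app U x) ∧
          (∀ z, zfj (jm.app j z) = pg.1.1.1 j z) := by
        intro j
        have hcomm : (ι.app j) ≫ TypeCat.ofHom (fun c => ((ev X).map c.down.op).app U x) =
            (a.app j) ≫ TypeCat.ofHom (fun z => pg.1.1.1 j z) := typeHom_ext' fun l => by
          show ((ev X).map ((ι.app j l).down.op)).app U x = pg.1.1.1 j (a.app j l)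
          exact (hr1 j l).symm
        exact ⟨(hpoL j).desc _ _ hcomm,
          fun c => ConcreteCategory.congr_hom ((hpoL j).inl_desc _ _ hcomm) c,
          fun z => ConcreteCategory.congr_hom ((hpoL j).inr_desc _ _ hcomm) z⟩
      choose zf hzb hzj using hdesc
      have hznat : ∀ (j j' : SimplexCategoryᵒᵖ) (β : j ⟶ j') (y : Ap1.obj j),
          zf j' (Ap1.map β y) = ((ev X).map β).app U (zf j y) := by
        intro j j' β y
        rcases typePushout_jointSurj (hpoL j) y with ⟨c, hc⟩ | ⟨z, hz⟩
        · rw [← hc]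
          have hbm : Ap1.map β (b.app j c) = b.app j' (Δ[m + 1].map β c) :=
            (NatTrans.naturality_apply b β c).symm
          rw [hbm, hzb j' (Δ[m + 1].map β c), hzb j c]
          have hop : ((Δ[m + 1].map β c).down).op = c.down.op ≫ β := by
            show (β.unop ≫ c.down).op = c.down.op ≫ β
            rw [op_comp, Quiver.Hom.op_unop]
          rw [hop, Functor.map_comp]
          rfl
        · rw [← hz]
          have hjm : Ap1.map β (jm.app j z) = jm.app j' (Ap.map β z) :=
            (NatTrans.naturality_apply jm β z).symm
          rw [hjm, hzj, hzj]
          exact pg.1.1.2 j j' β z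
      have hmem : (sHomMap Ap1 (evMap f ≫ evMap h)).app U ⟨fun j y => zf j y, hznat⟩ =
          (sHomRes up1 (ev Z)).app U ph.1.2 := by
        apply sHom_ext'
        intro j y
        rcases typePushout_jointSurj (hpoL j) y with ⟨c, hc⟩ | ⟨z, hz⟩
        · rw [← hc]
          show ((evMap f ≫ evMap h).app j).app U (zf j (b.app j c)) =
            ph.1.2.1 j (up1.app j (b.app j c))
          rw [hzb j c]
          have hnat : ((evMap f ≫ evMap h).app j).app U (((ev X).map c.down.op).app U x) =
              ((ev Z).map c.down.op).app U (((evMap f ≫ evMap h).app (op n1)).app U x) :=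
            ConcreteCategory.congr_hom (NatTrans.congr_app ((evMap f ≫ evMap h).naturality c.down.op) U) x
          rw [hnat]
          have hψx : ((evMap f ≫ evMap h).app (op n1)).app U x =
              ph.1.2.1 (op n1) (up1.app (op n1) btop) := by
            have hmh := congrFun (congrFun (congrArg Subtype.val ph.2) (op n1)) btop
            show ((evMap h).app (op n1)).app U (((evMap f).app (op n1)).app U x) = _
            rw [← hr2]
            exact hmh
          rw [hψx]
          have hup : up1.app j (b.app j c) = T.map c.down.op (up1.app (op n1) btop) := by
            rw [natTrans_app_eq b c]
            exact NatTrans.naturality_apply up1 _ _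
          rw [hup]
          exact (ph.1.2.2 (op n1) j c.down.op _).symm
        · rw [← hz]
          show ((evMap f ≫ evMap h).app j).app U (zf j (jm.app j z)) =
            ph.1.2.1 j (up1.app j (jm.app j z))
          rw [hzj j z]
          have hmg := congrFun (congrFun (congrArg Subtype.val pg.2) j) z
          have hu2 : up1.app j (jm.app j z) = up.app j z :=
            ConcreteCategory.congr_hom (congrArg (fun (t : Ap ⟶ T) => t.app j) huu) z
          rw [hu2, h2]
          exact hmg
      refine ⟨⟨(⟨fun j y => zf j y, hznat⟩, ph.1.2), hmem⟩, ?_⟩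
      apply Subtype.ext
      apply Prod.ext
      · apply Subtype.ext
        apply Prod.ext
        · apply Subtype.ext
          apply Prod.ext
          · apply sHom_ext'
            intro j y
            rcases typePushout_jointSurj (hpoL j) y with ⟨c, hc⟩ | ⟨z, hz⟩
            · rw [← hc]
              show ((evMap f).app j).app U (zf j (b.app j c)) = ph.1.1.1 j (b.app j c)
              rw [hzb j c]
              have hnat : ((evMap f).app j).app U (((ev X).map c.down.op).app U x) =
                  ((ev Y).map c.down.op).app U (((evMap f).app (op n1)).app U x) :=
                ConcreteCategory.congr_hom (NatTrans.congr_app ((evMap f).naturality c.down.op) U) x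
              rw [hnat, ← hr2, natTrans_app_eq b c]
              exact (ph.1.1.2 (op n1) j c.down.op btop).symm
            · rw [← hz]
              show ((evMap f).app j).app U (zf j (jm.app j z)) = ph.1.1.1 j (jm.app j z)
              rw [hzj j z, h1]
          · rfl
        · apply Subtype.ext
          apply Prod.ext
          · apply sHom_ext'
            intro j y
            exact hzj j y
          · exact h2
      · show zf (op n1) (b.app (op n1) (Δtop n1)) = x
        rw [hzb]
        show ((ev X).map ((Δtop n1).down.op)).app U x = x
        rw [show (Δtop n1).down = 𝟙 n1 from rfl, op_id, CategoryTheory.Functor.map_id]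
        rfl
  haveI : ∀ U, IsIso (Θ.app U) := fun U => (isIso_iff_bijective _).2 (hbij U)
  haveI : IsIso Θ := NatIso.isIso_of_isIso_app Θ
  have hfact : pairMap (evMap f) (evMap h) up1 =
      Θ ≫ cpbFst q₁ (hornMap (m + 1) q (evMap f)) ≫
        cpbFst rh (pairMap (evMap f) (evMap h) up) := rfl
  rw [hfact]
  exact RepCover.iso_comp Θ (hR.comp hQ)

end MainSteps

end CatCov

open CatCov in
/-- Let `C` be a category with covers, let `S ↪ T` be an inclusion of finite
simplicial sets with `S` collapsible via a chosen filtration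
`Δ⁰ ≅ A 0 ↪ A 1 ↪ ⋯ ↪ A N ≅ S` by horn-pushouts, and let `f : X ⟶ Y`, `h : Y ⟶ Z` (with
`g := h ∘ f`) be morphisms in `sC`.  Assume `f₀` is a cover, the relative horn objects `Λᵏ_i(f)`
are representable with `λᵏ_i(f)` a cover for all `1 ≤ k ≤ dim S`, and that
`(S_ℓ ↪ T)(h) := hom(S_ℓ, Y) ×_{hom(S_ℓ, Z)} hom(T, Z)` is representable for all `ℓ`.
Then for all `ℓ` the presheaf `(S_ℓ ↪ T)(g)` is representable in `C` and the induced map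
`f_* : (S_ℓ ↪ T)(g) ⟶ (S_ℓ ↪ T)(h)` is a cover. -/
theorem stmt_9 {C : Type u} [Category.{v} C] (cov : CoversOn C)
    {X Y Z : SimplicialObject C} (f : X ⟶ Y) (g : X ⟶ Z) (h : Y ⟶ Z) (hcomp : f ≫ h = g)
    (S T : SSet.{v}) (ι : S ⟶ T) (_ : Mono ι)
    (hSfin : ∀ j : SimplexCategoryᵒᵖ, Finite (S.obj j))
    (hTfin : ∀ j : SimplexCategoryᵒᵖ, Finite (T.obj j))
    -- a collapsible filtration of `S`:
    (N : ℕ) (A : ℕ → SSet.{v}) (jmap : ∀ ℓ, A ℓ ⟶ A (ℓ + 1))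
    (e0 : SSet.stdSimplex.obj (SimplexCategory.mk 0) ≅ A 0)
    (eS : A N ≅ S)
    (hsteps : ∀ ℓ, ℓ < N → ∃ (m : ℕ) (q : Fin (m + 2)) (a : (Λ[m + 1, q] : SSet) ⟶ A ℓ)
      (b : Δ[m + 1] ⟶ A (ℓ + 1)), IsPushout ((SSet.horn (m + 1) q).ι) a b (jmap ℓ))
    -- maps of the filtration stages into `T`, compatible with the filtration and with `ι`:
    (uT : ∀ ℓ, A ℓ ⟶ T) (hu : ∀ ℓ, ℓ < N → jmap ℓ ≫ uT (ℓ + 1) = uT ℓ)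
    (huS : uT N = eS.hom ≫ ι)
    -- a dimension bound `dim S ≤ d` and the horn-filling hypotheses on `f` up to dimension `d`:
    (d : ℕ) (hdim : DimLE S d)
    (hf0 : cov.isCover (f.app (op (SimplexCategory.mk 0))))
    (hhorn : ∀ (k : ℕ) (i : Fin (k + 2)), k + 1 ≤ d →
      RepCover cov (hornMap (k + 1) i (evMap f)))
    -- representability of `(S_ℓ ↪ T)(h)`:
    (hrep : ∀ ℓ, ℓ ≤ N → (pairObj (evMap h) (uT ℓ)).IsRepresentable) :
    ∀ ℓ, ℓ ≤ N →
      (pairObj (evMap f ≫ evMap h) (uT ℓ)).IsRepresentable ∧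
        RepCover cov (pairMap (evMap f) (evMap h) (uT ℓ)) := by
  classical
  -- each filtration map is levelwise injective
  have hjinj : ∀ ℓ', ℓ' < N → ∀ j, Function.Injective ((jmap ℓ').app j) := by
    intro ℓ' hℓ' j
    obtain ⟨m', q', a', b', sq'⟩ := hsteps ℓ' hℓ'
    have hpo : IsPushout ((SSet.horn (m' + 1) q').ι.app j) (a'.app j) (b'.app j)
        ((jmap ℓ').app j) := by
      have hmap := sq'.map ((evaluation SimplexCategoryᵒᵖ (Type v)).obj j)
      simpa using hmap
    exact typePushout_inr_injective hpo (horn_app_injective _ _ j)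
  -- levelwise injective maps up the filtration
  have hchain : ∀ (s k : ℕ), s + k ≤ N → ∃ w : A s ⟶ A (s + k),
      ∀ j, Function.Injective (w.app j) := by
    intro s k
    induction k with
    | zero => intro _; exact ⟨𝟙 _, fun j x x' hx => hx⟩
    | succ t iht =>
      intro hk
      obtain ⟨w, hw⟩ := iht (by omega)
      exact ⟨w ≫ jmap (s + t), fun j x x' hx => hw j (hjinj (s + t) (by omega) j hx)⟩
  suffices main : ∀ ℓ, ℓ ≤ N → RepCover cov (pairMap (evMap f) (evMap h) (uT ℓ)) by
    intro ℓ hℓ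
    exact ⟨(main ℓ hℓ).src_rep, main ℓ hℓ⟩
  intro ℓ
  induction ℓ with
  | zero =>
    intro _
    exact base_step cov f h e0 (uT 0) hf0 (hrep 0 (Nat.zero_le N))
  | succ p ihp =>
    intro hp1
    have hpN : p < N := hp1
    obtain ⟨m, qi, a, b, sq⟩ := hsteps p hpN
    have hpoL : ∀ j, IsPushout (((SSet.horn (m + 1) qi).ι).app j) (a.app j) (b.app j)
        ((jmap p).app j) := by
      intro j
      have hmap := sq.map ((evaluation SimplexCategoryᵒᵖ (Type v)).obj j)
      simpa using hmap
    -- the dimension bound on the attached cell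
    have hmd : m + 1 ≤ d := by
      by_contra hmd'
      push_neg at hmd'
      obtain ⟨w, hw⟩ := hchain (p + 1) (N - (p + 1)) (by omega)
      have hNN : p + 1 + (N - (p + 1)) = N := by omega
      have hw' : ∀ j, Function.Injective
          ((w ≫ eqToHom (congrArg A hNN) ≫ eS.hom).app j) := by
        intro j x x' hx
        apply hw j
        have hinj1 : Function.Injective ((eqToHom (congrArg A hNN)).app j) :=
          ((isIso_iff_bijective _).1 inferInstance).injective
        have hinj2 : Function.Injective (eS.hom.app j) :=
          ((isIso_iff_bijective _).1 inferInstance).injective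
        exact hinj1 (hinj2 hx)
      obtain ⟨k, y, hy⟩ := hdim m hmd'
        ((w ≫ eqToHom (congrArg A hNN) ≫ eS.hom).app _
          (b.app (op (SimplexCategory.mk (m + 1))) (Δtop _)))
      obtain ⟨w₁, hw₁⟩ := degen_transfer (w ≫ eqToHom (congrArg A hNN) ≫ eS.hom) hw' k
        (b.app (op (SimplexCategory.mk (m + 1))) (Δtop _)) y hy
      have hnot : ¬ ∃ l, ((SSet.horn (m + 1) qi).ι).app (op (SimplexCategory.mk (m + 1))) l =
          Δtop (SimplexCategory.mk (m + 1)) := by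
        rintro ⟨l, hl⟩
        exact top_not_in_horn qi l hl
      rcases typePushout_jointSurj (hpoL (op (SimplexCategory.mk m))) w₁ with ⟨c, hc⟩ | ⟨z, hz⟩
      · have hstep : b.app (op (SimplexCategory.mk (m + 1))) (Δtop _) =
            b.app _ (Δ[m + 1].map (SimplexCategory.σ k).op c) := by
          rw [NatTrans.naturality_apply b (SimplexCategory.σ k).op c, hc]
          exact hw₁
        have heq := typePushout_b_inj (hpoL _) hstep hnot
        exact top_not_degenerate k c heq.symm
      · have hstep : b.app (op (SimplexCategory.mk (m + 1))) (Δtop _) =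
            (jmap p).app _ ((A p).map (SimplexCategory.σ k).op z) := by
          rw [NatTrans.naturality_apply (jmap p) (SimplexCategory.σ k).op z, hz]
          exact hw₁
        obtain ⟨l, hl⟩ := typePushout_not_mix (hpoL _) hstep
        exact top_not_in_horn qi l hl
    exact ind_step cov f h sq (uT p) (uT (p + 1)) (hu p hpN)
      (hhorn m qi hmd) (hrep (p + 1) hp1) (ihp (Nat.le_of_lt hpN))
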